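/- Let K be a field, let A be a finite set of polynomials in K[x_1,…,x_n], let G be a chordal structure of A whose vertex set is contained in {x_1,…,x_n}, and suppose x_n > x_{n−1} > ⋯ > x_1 is a perfect elimination ordering of G. Define the projection procedure P_n = A and P_i = Proj(P_{i+1}, x_{i+1}) for i = n−1, …, 1, where for a finite set B and a variable x, Proj(B, x) is the union of all nonzero coefficients of the members of B regarded as univariate polynomials in x, the resultants res(f, ∂f/∂x, x) for f ∈ B, and the pairwise resultants res(f, g, x) for distinct f, g ∈ B. Then for every i = 1, …, n, G is a chordal structure of P_i; in particular every polynomial in P_i involves only the variables x_1, …, x_i. -/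

import Mathlib

open MvPolynomial

/-- The associated graph of a set of multivariate polynomials: vertices are variables,
with an edge between two distinct variables iff some polynomial contains both. -/
def assocGraph {σ R : Type*} [CommSemiring R] [DecidableEq σ]
    (F : Set (MvPolynomial σ R)) : SimpleGraph σ where
  Adj i j := i ≠ j ∧ ∃ f ∈ F, i ∈ f.vars ∧ j ∈ f.vars
  symm := by
    constructor
    intro i j h
    exact ⟨h.1.symm, by obtain ⟨f, hf, hi, hj⟩ := h.2; exact ⟨f, hf, hj, hi⟩⟩
  loopless := by constructor; intro i h; exact h.1 rfl

/-- `lt` (a strict linear ordering of the vertices) is a perfect elimination ordering of `G`: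
for every vertex `v`, the vertex `v` together with its earlier neighbours forms a clique. -/
def IsPEO {V : Type*} (G : SimpleGraph V) (lt : V → V → Prop) : Prop :=
  ∀ v : V, G.IsClique (insert v {u | lt u v ∧ G.Adj u v})

/-- A graph is chordal if it admits a perfect elimination ordering. -/
def ChordalGraph {V : Type*} (G : SimpleGraph V) : Prop :=
  ∃ lt : V → V → Prop, IsStrictTotalOrder V lt ∧ IsPEO G lt

/-- `G` is a chordal structure of `F`: `G` is chordal and the associated graph of `F`
is a subgraph of `G`. -/
def ChordalStructure {σ R : Type*} [CommSemiring R] [DecidableEq σ]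
    (G : SimpleGraph σ) (F : Set (MvPolynomial σ R)) : Prop :=
  ChordalGraph G ∧ assocGraph F ≤ G

/-- `f` regarded as a univariate polynomial in the variable `k`,
with coefficients in the polynomial ring in the remaining variables. -/
noncomputable def toUnivar {σ R : Type*} [CommSemiring R] [DecidableEq σ] (k : σ)
    (f : MvPolynomial σ R) : Polynomial (MvPolynomial {j : σ // j ≠ k} R) :=
  optionEquivLeft R {j : σ // j ≠ k} (rename (Equiv.optionSubtypeNe k).symm f)

/-- The `i`-th coefficient of `f` regarded as a univariate polynomial in `k`,
viewed again as a polynomial in all the variables. -/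
noncomputable def coeffWrt {σ R : Type*} [CommSemiring R] [DecidableEq σ] (k : σ)
    (f : MvPolynomial σ R) (i : ℕ) : MvPolynomial σ R :=
  rename Subtype.val ((toUnivar k f).coeff i)

/-- The leading coefficient of `f` regarded as a univariate polynomial in `k`. -/
noncomputable def lcWrt {σ R : Type*} [CommSemiring R] [DecidableEq σ] (k : σ)
    (f : MvPolynomial σ R) : MvPolynomial σ R :=
  rename Subtype.val (toUnivar k f).leadingCoeff

/-- The Sylvester matrix of two univariate polynomials `p` and `q`:
the first `q.natDegree` rows are the shifted coefficient vectors of `p`,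
the remaining `p.natDegree` rows are the shifted coefficient vectors of `q`. -/
noncomputable def sylvesterMatrix {R : Type*} [CommRing R] (p q : Polynomial R) :
    Matrix (Fin (q.natDegree + p.natDegree)) (Fin (q.natDegree + p.natDegree)) R :=
  Matrix.of fun i j =>
    if (i : ℕ) < q.natDegree then
      (if (i : ℕ) ≤ (j : ℕ) ∧ (j : ℕ) ≤ (i : ℕ) + p.natDegree
        then p.coeff (p.natDegree - ((j : ℕ) - (i : ℕ))) else 0)
    else
      (if (i : ℕ) - q.natDegree ≤ (j : ℕ) ∧ (j : ℕ) ≤ ((i : ℕ) - q.natDegree) + q.natDegree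
        then q.coeff (q.natDegree - ((j : ℕ) - ((i : ℕ) - q.natDegree))) else 0)

/-- The resultant of two univariate polynomials: the determinant of their Sylvester matrix. -/
noncomputable def resultant {R : Type*} [CommRing R] (p q : Polynomial R) : R :=
  (sylvesterMatrix p q).det

/-- The resultant of `f` and `g` with respect to the variable `k`: the resultant of `f` and `g`
regarded as univariate polynomials in `k`, viewed again as a polynomial in all the variables. -/
noncomputable def resWrt {σ R : Type*} [CommRing R] [DecidableEq σ] (k : σ)
    (f g : MvPolynomial σ R) : MvPolynomial σ R :=
  rename Subtype.val (resultant (toUnivar k f) (toUnivar k g))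

/-- The CAD projection operator: the nonzero coefficients (w.r.t. `x`) of the members of `A`,
the resultants `res(f, ∂f/∂x, x)` for `f ∈ A`, and the pairwise resultants `res(f, g, x)` for
distinct `f, g ∈ A`. -/
noncomputable def ProjSet {σ R : Type*} [CommRing R] [DecidableEq σ] (x : σ)
    (A : Set (MvPolynomial σ R)) : Set (MvPolynomial σ R) :=
  {a | (∃ f ∈ A, ∃ i : ℕ, a = coeffWrt x f i) ∧ a ≠ 0} ∪
  {r | ∃ f ∈ A, r = resWrt x f (pderiv x f)} ∪
  {r | ∃ f ∈ A, ∃ g ∈ A, f ≠ g ∧ r = resWrt x f g}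

/-!
Every member of `Proj(B, x)` involves only variables other than `x` of at most two members `f, g`
of `B`. Coefficients and discriminants involve the variables of a single `f`, which form a clique.
For a resultant `res(f, g, x)` with `x` occurring in both `f` and `g`, every remaining variable is
an earlier neighbour of `x`, so these variables form a clique by the perfect elimination property
at `x`; if `x` does not occur in `f` (or `g`), the resultant is a power of `f` (or `g`). Thus the
clique property and the bound on the variables descend from `P n = A` to every `P i`.
-/

namespace MvPolynomial

variable {σ R : Type*}

theorem vars_pderiv_subset [CommSemiring R] (x : σ) (f : MvPolynomial σ R) :
    (pderiv x f).vars ⊆ f.vars := by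
  classical
  intro u hu
  obtain ⟨m, hm, hum⟩ := (mem_vars_iff_mem_support u).1 hu
  rw [mem_support_iff, coeff_pderiv] at hm
  refine (mem_vars_iff_mem_support u).2
    ⟨m + Finsupp.single x 1, mem_support_iff.2 (left_ne_zero_of_mul hm), ?_⟩
  rw [Finsupp.mem_support_iff] at hum ⊢
  simp only [Finsupp.coe_add, Pi.add_apply]
  omega

theorem vars_det_subset [CommRing R] {N : Type*} [Fintype N] [DecidableEq N]
    (M : Matrix N N (MvPolynomial σ R)) {s : Set σ} (hM : ∀ i j, ↑(M i j).vars ⊆ s) :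
    ↑M.det.vars ⊆ s := by
  let M' : Matrix N N (supported R s) := fun i j => ⟨M i j, mem_supported.2 (hM i j)⟩
  have hdet : M.det = (M'.det : MvPolynomial σ R) :=
    (RingHom.map_det (supported R s).val.toRingHom M').symm
  rw [← mem_supported, hdet]
  exact M'.det.2

theorem some_mem_vars_of_mem_vars_optionEquivLeft_coeff [CommSemiring R]
    {g : MvPolynomial (Option σ) R} {i : ℕ} {w : σ}
    (h : w ∈ ((optionEquivLeft R σ g).coeff i).vars) : some w ∈ g.vars := by
  obtain ⟨m, hm, hw⟩ := (mem_vars_iff_mem_support w).1 h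
  rw [mem_support_coeff_optionEquivLeft] at hm
  refine (mem_vars_iff_mem_support _).2 ⟨_, hm, ?_⟩
  rwa [Finsupp.mem_support_iff, Finsupp.optionElim_apply_some, ← Finsupp.mem_support_iff]

end MvPolynomial

section ToUnivar

variable {σ R : Type*} [CommSemiring R] [DecidableEq σ] {k : σ}

theorem val_mem_vars_of_mem_vars_toUnivar_coeff {f : MvPolynomial σ R} {i : ℕ}
    {w : {j : σ // j ≠ k}} (h : w ∈ ((toUnivar k f).coeff i).vars) : w.val ∈ f.vars := by
  obtain ⟨v, hv, hvw⟩ := mem_vars_rename _ _ (some_mem_vars_of_mem_vars_optionEquivLeft_coeff h)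
  rw [Equiv.symm_apply_eq] at hvw
  simpa [hvw] using hv

theorem vars_coeffWrt_subset (f : MvPolynomial σ R) (i : ℕ) :
    (coeffWrt k f i).vars ⊆ f.vars.erase k := by
  intro u hu
  obtain ⟨w, hw, rfl⟩ := mem_vars_rename _ _ hu
  exact Finset.mem_erase.2 ⟨w.2, val_mem_vars_of_mem_vars_toUnivar_coeff hw⟩

theorem toUnivar_eq_C_of_notMem_vars {f : MvPolynomial σ R} (hk : k ∉ f.vars) :
    ∃ c : MvPolynomial {j : σ // j ≠ k} R,
      toUnivar k f = Polynomial.C c ∧ rename Subtype.val c = f := by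
  have hr : ↑f.vars ⊆ Set.range (Subtype.val : {j : σ // j ≠ k} → σ) :=
    fun v hv => ⟨⟨v, fun hvk => hk (hvk ▸ hv)⟩, rfl⟩
  obtain ⟨c, rfl⟩ := exists_rename_eq_of_vars_subset_range f _ Subtype.val_injective hr
  refine ⟨c, ?_, rfl⟩
  have hcomp : (Equiv.optionSubtypeNe k).symm ∘ Subtype.val = some := by
    funext u
    exact Equiv.optionSubtypeNe_symm_of_ne u.2
  rw [toUnivar, rename_rename, hcomp, ← AlgEquiv.apply_symm_apply (optionEquivLeft R _)
    (Polynomial.C c), optionEquivLeft_symm_apply, Polynomial.aevalTower_C]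

end ToUnivar

section Resultant

theorem resultant_C_left {R : Type*} [CommRing R] (c : R) (q : Polynomial R) :
    resultant (Polynomial.C c) q = c ^ q.natDegree := by
  have hM : sylvesterMatrix (Polynomial.C c) q = Matrix.diagonal fun _ => c := by
    ext i j
    have hi : (i : ℕ) < q.natDegree := by simpa using i.isLt
    rw [sylvesterMatrix, Matrix.of_apply, if_pos hi, Matrix.diagonal_apply]
    by_cases hij : i = j
    · subst hij
      simp
    · rw [if_neg hij, if_neg]
      rintro ⟨hij₁, hij₂⟩
      exact hij (Fin.ext (by simp at hij₂; omega))
  simp [resultant, hM]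

theorem resultant_C_right {R : Type*} [CommRing R] (c : R) (p : Polynomial R) :
    resultant p (Polynomial.C c) = c ^ p.natDegree := by
  have hM : sylvesterMatrix p (Polynomial.C c) = Matrix.diagonal fun _ => c := by
    ext i j
    rw [sylvesterMatrix, Matrix.of_apply, if_neg (by simp), Matrix.diagonal_apply]
    by_cases hij : i = j
    · subst hij
      simp
    · rw [if_neg hij, if_neg]
      rintro ⟨hij₁, hij₂⟩
      exact hij (Fin.ext (by simp at hij₁ hij₂; omega))
  simp [resultant, hM]

variable {σ R : Type*} [CommRing R] [DecidableEq σ] {k : σ}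

theorem vars_resWrt_subset (f g : MvPolynomial σ R) :
    (resWrt k f g).vars ⊆ (f.vars ∪ g.vars).erase k := by
  intro u hu
  obtain ⟨w, hw, rfl⟩ := mem_vars_rename _ _ hu
  refine Finset.mem_erase.2 ⟨w.2, ?_⟩
  suffices ↑(resultant (toUnivar k f) (toUnivar k g)).vars ⊆
      {w : {j : σ // j ≠ k} | w.val ∈ f.vars ∪ g.vars} from
    this hw
  refine vars_det_subset _ fun i j v hv => ?_
  rw [Finset.mem_coe, sylvesterMatrix, Matrix.of_apply] at hv
  split_ifs at hv
  · exact Finset.mem_union_left _ (val_mem_vars_of_mem_vars_toUnivar_coeff hv)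
  · simp at hv
  · exact Finset.mem_union_right _ (val_mem_vars_of_mem_vars_toUnivar_coeff hv)
  · simp at hv

theorem vars_resWrt_pderiv_subset (f : MvPolynomial σ R) :
    (resWrt k f (pderiv k f)).vars ⊆ f.vars.erase k :=
  (vars_resWrt_subset _ _).trans
    (Finset.erase_subset_erase k (Finset.union_subset le_rfl (vars_pderiv_subset k f)))

theorem resWrt_eq_pow_left {f g : MvPolynomial σ R} (hk : k ∉ f.vars) :
    resWrt k f g = f ^ (toUnivar k g).natDegree := by
  obtain ⟨c, hc, rfl⟩ := toUnivar_eq_C_of_notMem_vars hk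
  rw [resWrt, hc, resultant_C_left, map_pow]

theorem resWrt_eq_pow_right {f g : MvPolynomial σ R} (hk : k ∉ g.vars) :
    resWrt k f g = g ^ (toUnivar k f).natDegree := by
  obtain ⟨c, hc, rfl⟩ := toUnivar_eq_C_of_notMem_vars hk
  rw [resWrt, hc, resultant_C_right, map_pow]

end Resultant

theorem assocGraph_le_iff {σ R : Type*} [CommSemiring R] [DecidableEq σ]
    {F : Set (MvPolynomial σ R)} {G : SimpleGraph σ} :
    assocGraph F ≤ G ↔ ∀ f ∈ F, G.IsClique (f.vars : Set σ) := by
  constructor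
  · intro h f hf u hu v hv huv
    exact h ⟨huv, f, hf, hu, hv⟩
  · rintro h u v ⟨huv, f, hf, hu, hv⟩
    exact h f hf hu hv huv

section Projection

variable {σ R : Type*} [CommRing R] [DecidableEq σ] {x : σ}

theorem exists_vars_subset_of_mem_projSet {B : Set (MvPolynomial σ R)} {h : MvPolynomial σ R}
    (hh : h ∈ ProjSet x B) : ∃ f ∈ B, ∃ g ∈ B, h.vars ⊆ (f.vars ∪ g.vars).erase x := by
  rcases hh with (⟨⟨f, hf, i, rfl⟩, -⟩ | ⟨f, hf, rfl⟩) | ⟨f, hf, g, hg, -, rfl⟩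
  · exact ⟨f, hf, f, hf, by simpa using vars_coeffWrt_subset f i⟩
  · exact ⟨f, hf, f, hf, by simpa using vars_resWrt_pderiv_subset f⟩
  · exact ⟨f, hf, g, hg, vars_resWrt_subset f g⟩

theorem lt_of_mem_vars_of_mem_projSet [PartialOrder σ] {B : Set (MvPolynomial σ R)}
    (hB : ∀ f ∈ B, ∀ u ∈ f.vars, u ≤ x) {h : MvPolynomial σ R} (hh : h ∈ ProjSet x B)
    {u : σ} (hu : u ∈ h.vars) : u < x := by
  obtain ⟨f, hf, g, hg, hsub⟩ := exists_vars_subset_of_mem_projSet hh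
  obtain ⟨hux, hu⟩ := Finset.mem_erase.1 (hsub hu)
  rcases Finset.mem_union.1 hu with hu | hu
  · exact (hB f hf u hu).lt_of_ne hux
  · exact (hB g hg u hu).lt_of_ne hux

theorem isClique_vars_resWrt [PartialOrder σ] {G : SimpleGraph σ} {f g : MvPolynomial σ R}
    (hx : G.IsClique (insert x {u | u < x ∧ G.Adj u x}))
    (hf : G.IsClique (f.vars : Set σ)) (hg : G.IsClique (g.vars : Set σ))
    (hfx : ∀ u ∈ f.vars, u ≤ x) (hgx : ∀ u ∈ g.vars, u ≤ x) :
    G.IsClique ((resWrt x f g).vars : Set σ) := by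
  by_cases hxf : x ∉ f.vars
  · rw [resWrt_eq_pow_left hxf]
    exact hf.subset (Finset.coe_subset.2 (vars_pow f _))
  by_cases hxg : x ∉ g.vars
  · rw [resWrt_eq_pow_right hxg]
    exact hg.subset (Finset.coe_subset.2 (vars_pow g _))
  push Not at hxf hxg
  refine hx.subset fun u hu => Or.inr ?_
  obtain ⟨hux, hu⟩ := Finset.mem_erase.1 (vars_resWrt_subset f g hu)
  rcases Finset.mem_union.1 hu with hu | hu
  · exact ⟨(hfx u hu).lt_of_ne hux, hf hu hxf hux⟩
  · exact ⟨(hgx u hu).lt_of_ne hux, hg hu hxg hux⟩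

theorem isClique_vars_of_mem_projSet [PartialOrder σ] {G : SimpleGraph σ}
    (hx : G.IsClique (insert x {u | u < x ∧ G.Adj u x})) {B : Set (MvPolynomial σ R)}
    (hBG : ∀ f ∈ B, G.IsClique (f.vars : Set σ)) (hB : ∀ f ∈ B, ∀ u ∈ f.vars, u ≤ x)
    {h : MvPolynomial σ R} (hh : h ∈ ProjSet x B) : G.IsClique (h.vars : Set σ) := by
  rcases hh with (⟨⟨f, hf, i, rfl⟩, -⟩ | ⟨f, hf, rfl⟩) | ⟨f, hf, g, hg, -, rfl⟩
  · exact (hBG f hf).subset (Finset.coe_subset.2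
      ((vars_coeffWrt_subset f i).trans (Finset.erase_subset _ _)))
  · exact (hBG f hf).subset (Finset.coe_subset.2
      ((vars_resWrt_pderiv_subset f).trans (Finset.erase_subset _ _)))
  · exact isClique_vars_resWrt hx (hBG f hf) (hBG g hg) (hB f hf) (hB g hg)

end Projection

/-- Let `G` be a chordal structure of `A` (with vertices among
`x_1, …, x_n`, identified with `Fin n` where `x_{i+1}` is the index `i`) for which
`x_n > ⋯ > x_1` (i.e. the natural order on `Fin n`) is a perfect elimination ordering.
If `P n = A` and `P i = Proj(P (i+1), x_{i+1})` for `i = n-1, …, 1`, then for every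
`1 ≤ i ≤ n`, `G` is a chordal structure of `P i` and every polynomial in `P i` involves only
the variables `x_1, …, x_i`. -/
theorem chordalStructure_projection_procedure {K : Type*} [Field K] {n : ℕ}
    (A : Set (MvPolynomial (Fin n) K))
    (G : SimpleGraph (Fin n))
    (hsub : assocGraph A ≤ G)
    (hpeo : IsPEO G (fun u v : Fin n => u < v))
    (P : ℕ → Set (MvPolynomial (Fin n) K))
    (hPn : P n = A)
    (hP : ∀ i : ℕ, ∀ _h1 : 1 ≤ i, ∀ _h2 : i ≤ n - 1,
      P i = ProjSet (⟨i, by omega⟩ : Fin n) (P (i + 1))) :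
    ∀ i : ℕ, 1 ≤ i → i ≤ n →
      ChordalStructure G (P i) ∧ ∀ f ∈ P i, ∀ y ∈ f.vars, (y : ℕ) < i := by
  intro i hi hin
  have key : ∀ f ∈ P i, G.IsClique (f.vars : Set (Fin n)) ∧ ∀ y ∈ f.vars, (y : ℕ) < i := by
    induction hin using Nat.decreasingInduction with
    | self => exact hPn ▸ fun f hf => ⟨assocGraph_le_iff.1 hsub f hf, fun y _ => y.isLt⟩
    | of_succ k hk ih =>
      have hle : ∀ f ∈ P (k + 1), ∀ u ∈ f.vars, u ≤ (⟨k, hk⟩ : Fin n) :=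
        fun f hf u hu => Fin.le_def.2 (Nat.lt_succ_iff.1 ((ih (by omega) f hf).2 u hu))
      have hclique : ∀ f ∈ P (k + 1), G.IsClique (f.vars : Set (Fin n)) :=
        fun f hf => (ih (by omega) f hf).1
      rw [hP k hi (by omega)]
      exact fun f hf => ⟨isClique_vars_of_mem_projSet (hpeo _) hclique hle hf,
        fun y hy => Fin.lt_def.1 (lt_of_mem_vars_of_mem_projSet hle hf hy)⟩
  exact ⟨⟨⟨_, inferInstance, hpeo⟩, assocGraph_le_iff.2 fun f hf => (key f hf).1⟩,
    fun f hf => (key f hf).2⟩
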